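/- For n ≥ 0, the coefficient expansion T_n^{(r,k)}(x|λ) = Σ_{l=0}^{n} [Σ_{j=l}^{n} Σ_{m=0}^{n-j} (-1)^{n-m-j} C(n,j) C(j,l) m!/(m+1)^k · H_{j-l}^{(r)}(λ) S₂(n-j,m)] x^l holds. -/

import Mathlib

/-!
Write `A = 1 - e^{-t}`. Since `A` has no constant term, `Li_k(A) = A · Σ_{m ≥ 0} A^m / (m+1)^k`,
and `A^m = m! Σ_q (-1)^{q-m} S₂(q,m) t^q/q!`. Cancelling the nonzero factor `A` from the
defining relation of `T` exhibits the exponential generating function of `T(·, x)` as the product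
of `e^{xt}`, of `((1-λ)/(e^t-λ))^r = Σ H_n t^n/n!` and of the series `Li_k(A)/A`; the formula is
the coefficient of `t^n/n!` in this product, computed by two binomial convolutions.
-/

open PowerSeries Finset

/-- e^{xt} as a formal power series. -/
noncomputable def expX (x : ℂ) : PowerSeries ℂ := rescale x (exp ℂ)

/-- 1 - e^{-t} as a formal power series. -/
noncomputable def oneSubExpNeg : PowerSeries ℂ := 1 - rescale (-1) (exp ℂ)

/-- Li_k(1-e^{-t}) = Σ_{m≥1} (1-e^{-t})^m / m^k as a formal power series. -/
noncomputable def polyLogC (k : ℤ) : PowerSeries ℂ :=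
  mk fun n => ∑ m ∈ Finset.Icc 1 n, (coeff n (oneSubExpNeg ^ m)) * ((m : ℂ) ^ k)⁻¹

/-- integer power of a power series (inverse via `PowerSeries.inv`). -/
noncomputable def zpowS (f : PowerSeries ℂ) (r : ℤ) : PowerSeries ℂ :=
  f ^ r.toNat * (f⁻¹) ^ (-r).toNat

/-- (1-λ)/(e^t-λ). -/
noncomputable def feBase (l : ℂ) : PowerSeries ℂ :=
  C (1 - l) * (exp ℂ - C l)⁻¹

/-- exponential generating function Σ f(n) t^n/n!. -/
noncomputable def GF (f : ℕ → ℂ) : PowerSeries ℂ := mk fun n => f n / n.factorial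

/-- Stirling numbers of the second kind: (e^t-1)^m = m! Σ_l S2(l,m) t^l/l!. -/
noncomputable def S2 (n m : ℕ) : ℂ :=
  (n.factorial : ℂ) / (m.factorial : ℂ) * coeff n ((exp ℂ - 1) ^ m)

open scoped Nat

lemma coeff_GF (f : ℕ → ℂ) (n : ℕ) : coeff n (GF f) = f n / n ! := coeff_mk _ _

lemma GF_injective : Function.Injective GF := by
  intro f g hfg
  funext n
  simpa [coeff_GF, Nat.factorial_ne_zero] using congrArg (coeff n) hfg

lemma GF_mul (f g : ℕ → ℂ) :
    GF f * GF g = GF fun n => ∑ j ∈ range (n + 1), (n.choose j : ℂ) * f j * g (n - j) := by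
  ext n
  rw [coeff_mul, Nat.sum_antidiagonal_eq_sum_range_succ_mk, coeff_GF, sum_div]
  refine sum_congr rfl fun j hj => ?_
  have hn : (n ! : ℂ) ≠ 0 := mod_cast n.factorial_ne_zero
  rw [coeff_GF, coeff_GF, Nat.cast_choose ℂ (Nat.lt_succ_iff.mp (mem_range.mp hj))]
  field_simp

lemma coeff_exp_complex (n : ℕ) : coeff n (exp ℂ) = (n ! : ℂ)⁻¹ := by
  simp [coeff_exp]

lemma expX_eq_GF (x : ℂ) : expX x = GF fun n => x ^ n := by
  ext n
  rw [expX, coeff_rescale, coeff_exp_complex, coeff_GF, div_eq_mul_inv]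

lemma expX_zero : expX 0 = 1 := by
  simp [expX, rescale_zero, constantCoeff_exp]

lemma coeff_pow_eq_zero_of_lt {R : Type*} [CommSemiring R] {f : R⟦X⟧}
    (hf : constantCoeff f = 0) {q m : ℕ} (h : q < m) : coeff q (f ^ m) = 0 :=
  X_pow_dvd_iff.mp (pow_dvd_pow_of_dvd (X_dvd_iff.mpr hf) m) q h

lemma constantCoeff_oneSubExpNeg : constantCoeff oneSubExpNeg = 0 := by
  simp [oneSubExpNeg, ← coeff_zero_eq_constantCoeff, coeff_rescale]

lemma oneSubExpNeg_ne_zero : oneSubExpNeg ≠ 0 := by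
  intro h
  have h1 := congrArg (coeff 1) h
  norm_num [oneSubExpNeg, coeff_rescale, coeff_exp_complex] at h1

lemma oneSubExpNeg_pow (m : ℕ) :
    oneSubExpNeg ^ m = GF fun q => (-1) ^ (q + m) * m ! * S2 q m := by
  have hA : oneSubExpNeg = C (-1) * rescale (-1 : ℂ) (exp ℂ - 1) := by
    simp [oneSubExpNeg]
  ext q
  have hm : (m ! : ℂ) ≠ 0 := mod_cast m.factorial_ne_zero
  have hq : (q ! : ℂ) ≠ 0 := mod_cast q.factorial_ne_zero
  rw [hA, mul_pow, ← map_pow, ← map_pow, coeff_C_mul, coeff_rescale, coeff_GF, S2]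
  field_simp
  ring

lemma mul_mk_sum_coeff_pow {R : Type*} [CommSemiring R] {f : R⟦X⟧}
    (hf : constantCoeff f = 0) (c : ℕ → R) :
    f * mk (fun q => ∑ m ∈ range (q + 1), c m * coeff q (f ^ m))
      = mk fun n => ∑ m ∈ range (n + 1), c m * coeff n (f ^ (m + 1)) := by
  ext n
  rw [coeff_mk]
  set P := ∑ m ∈ range (n + 1), C (c m) * f ^ m
  have htrunc : ∀ j ≤ n, coeff j (mk fun q => ∑ m ∈ range (q + 1), c m * coeff q (f ^ m))
      = coeff j P := by
    intro j hj
    rw [coeff_mk, map_sum]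
    simp_rw [coeff_C_mul]
    refine sum_subset (range_subset_range.mpr (by omega)) fun m _ hm => ?_
    rw [coeff_pow_eq_zero_of_lt hf (by simpa using hm), mul_zero]
  calc coeff n (f * mk fun q => ∑ m ∈ range (q + 1), c m * coeff q (f ^ m))
      = coeff n (f * P) := by
        rw [coeff_mul, coeff_mul]
        exact sum_congr rfl fun p hp => by rw [htrunc p.2 (HasAntidiagonal.antidiagonal.snd_le hp)]
    _ = ∑ m ∈ range (n + 1), c m * coeff n (f ^ (m + 1)) := by
        simp_rw [P, mul_sum, map_sum, mul_left_comm f, ← pow_succ', coeff_C_mul]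

lemma polyLogC_eq_oneSubExpNeg_mul (k : ℤ) :
    polyLogC k = oneSubExpNeg * GF fun q => ∑ m ∈ range (q + 1),
      (-1) ^ (q - m) * (m ! * (((m : ℂ) + 1) ^ k)⁻¹) * S2 q m := by
  have hQ : (GF fun q => ∑ m ∈ range (q + 1),
        (-1) ^ (q - m) * (m ! * (((m : ℂ) + 1) ^ k)⁻¹) * S2 q m)
      = mk fun q => ∑ m ∈ range (q + 1), (((m : ℂ) + 1) ^ k)⁻¹ * coeff q (oneSubExpNeg ^ m) := by
    ext q
    rw [coeff_GF, coeff_mk, sum_div]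
    refine sum_congr rfl fun m hm => ?_
    have hsign : (-1 : ℂ) ^ (q + m) = (-1) ^ (q - m) := by
      rw [show q + m = q - m + 2 * m by grind, pow_add, pow_mul, neg_one_sq, one_pow, mul_one]
    rw [oneSubExpNeg_pow, coeff_GF, hsign]
    ring
  ext n
  rw [hQ, mul_mk_sum_coeff_pow constantCoeff_oneSubExpNeg, polyLogC, coeff_mk, coeff_mk,
    sum_range_succ, coeff_pow_eq_zero_of_lt constantCoeff_oneSubExpNeg n.lt_succ_self, mul_zero,
    add_zero, ← Ico_add_one_right_eq_Icc, sum_Ico_eq_sum_range, Nat.add_sub_cancel]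
  refine sum_congr rfl fun m _ => ?_
  rw [add_comm 1 m, Nat.cast_succ, mul_comm]

theorem stmt5_general (lam : ℂ) (r k : ℤ) (T H : ℕ → ℂ → ℂ)
    (hT : ∀ x : ℂ, oneSubExpNeg * GF (fun n => T n x)
        = zpowS (feBase lam) (r) * polyLogC (k) * expX x)
    (hH : ∀ x : ℂ, GF (fun n => H n x) = zpowS (feBase lam) r * expX x) :
    ∀ (n : ℕ) (x : ℂ),
      T n x = ∑ i ∈ range (n + 1),
        (∑ j ∈ Finset.Icc i n, ∑ m ∈ range (n - j + 1),
          (-1 : ℂ) ^ (n - m - j) * (n.choose j : ℂ) * (j.choose i : ℂ) *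
            ((m.factorial : ℂ) * (((m : ℂ) + 1) ^ k)⁻¹) * H (j - i) 0 * S2 (n - j) m) * x ^ i := by
  intro n x
  have hH0 : GF (fun n => H n 0) = zpowS (feBase lam) r := by
    simpa [expX_zero] using hH 0
  have hGF : GF (fun n => T n x) = expX x * GF (fun n => H n 0) * GF fun q =>
      ∑ m ∈ range (q + 1), (-1) ^ (q - m) * (m ! * (((m : ℂ) + 1) ^ k)⁻¹) * S2 q m :=
    mul_left_cancel₀ oneSubExpNeg_ne_zero <| by
      rw [hT x, hH0, polyLogC_eq_oneSubExpNeg_mul]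
      ring
  rw [expX_eq_GF, GF_mul, GF_mul] at hGF
  rw [congrFun (GF_injective hGF) n]
  simp_rw [← Ico_add_one_right_eq_Icc, sum_mul]
  rw [range_eq_Ico, sum_Ico_Ico_comm]
  refine sum_congr rfl fun j _ => ?_
  simp_rw [mul_sum, sum_mul, ← range_eq_Ico]
  rw [sum_comm]
  refine sum_congr rfl fun i _ => sum_congr rfl fun m _ => ?_
  rw [Nat.sub_right_comm]
  ring

theorem stmt5 (lam : ℂ) (hlam : lam ≠ 1) (r k : ℤ) (T H : ℕ → ℂ → ℂ)
    (hT : ∀ x : ℂ, oneSubExpNeg * GF (fun n => T n x)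
        = zpowS (feBase lam) (r) * polyLogC (k) * expX x)
    (hH : ∀ x : ℂ, GF (fun n => H n x) = zpowS (feBase lam) r * expX x) :
    ∀ (n : ℕ) (x : ℂ),
      T n x = ∑ i ∈ range (n + 1),
        (∑ j ∈ Finset.Icc i n, ∑ m ∈ range (n - j + 1),
          (-1 : ℂ) ^ (n - m - j) * (n.choose j : ℂ) * (j.choose i : ℂ) *
            ((m.factorial : ℂ) * (((m : ℂ) + 1) ^ k)⁻¹) * H (j - i) 0 * S2 (n - j) m) * x ^ i :=
  stmt5_general lam r k T H hT hH
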